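/- Let α, φ, ψ : ℂ → ℝ be smooth with φ > 0, ψ ≥ 0, α > 0 everywhere, and suppose there exists a smooth, everywhere positive function β : ℂ → ℝ with β(z) = α(1/z)·|z|^{-4} for all z ≠ 0. Let K : ℂ → ℝ be smooth, nonpositive, not identically zero, with |K| ≤ Λψ for a constant Λ. Let k be a constant such that: (1) there is a constant M with α·φ^{k} ≤ M·ψ, and α^{1-q}(φ^{-k}ψ)^{q} is Lebesgue integrable for some q > 1; (2) k·Δ(log φ) is Lebesgue integrable on ℂ with ∫_ℂ k·Δ(log φ) dxdy < 0, and |k·φ^{k}·Δ(log φ)| ≤ 2Λψ pointwise. Then any two solutions u, u' of Δu + K e^{2u} = 0 on ℂ of the form 2u = v - k·log φ and 2u' = v' - k·log φ, with v, v' : ℂ → ℝ smooth and bounded, coincide: u = u'. -/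

import Mathlib

open MeasureTheory

/-- The Euclidean Laplacian `Δ = ∂²/∂x² + ∂²/∂y²` of a function on `ℂ ≅ ℝ²`. -/
noncomputable def lap (f : ℂ → ℝ) (z : ℂ) : ℝ :=
  deriv (deriv (fun x : ℝ => f (z + x))) 0 +
  deriv (deriv (fun y : ℝ => f (z + y * Complex.I))) 0

open Filter Topology


/-- Second derivative at an interior local max of a C² function is ≤ 0. -/
lemma deriv2_nonpos_of_isLocalMax {f : ℝ → ℝ} (hf : ContDiffAt ℝ 2 f 0)
    (hmax : IsLocalMax f 0) : deriv (deriv f) 0 ≤ 0 := by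
  by_contra hpos
  push_neg at hpos
  obtain ⟨s, hs, hfs⟩ := hf.contDiffOn (le_refl 2) (by simp)
  have hsub : interior s ∈ 𝓝 (0:ℝ) := interior_mem_nhds.mpr hs
  have hfs' : ContDiffOn ℝ 2 f (interior s) := hfs.mono interior_subset
  have hderiv : ContDiffOn ℝ 1 (deriv f) (interior s) :=
    hfs'.deriv_of_isOpen isOpen_interior (by norm_num)
  have hdd : DifferentiableAt ℝ (deriv f) 0 :=
    ((hderiv.differentiableOn (by norm_num)).differentiableAt hsub)
  have hg0 : deriv f 0 = 0 := hmax.deriv_eq_zero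
  have hslope : Tendsto (slope (deriv f) 0) (𝓝[≠] (0:ℝ)) (𝓝 (deriv (deriv f) 0)) :=
    hasDerivAt_iff_tendsto_slope.mp hdd.hasDerivAt
  have hev : ∀ᶠ t in 𝓝[≠] (0:ℝ), 0 < slope (deriv f) 0 t :=
    hslope.eventually (eventually_gt_nhds hpos)
  rw [eventually_nhdsWithin_iff] at hev
  have hcomb : ∀ᶠ t in 𝓝 (0:ℝ), (t ∈ ({0}ᶜ : Set ℝ) → 0 < slope (deriv f) 0 t) ∧ t ∈ interior s ∧ f t ≤ f 0 :=
    hev.and ((Filter.eventually_iff.mpr (by simpa using hsub)).and hmax)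
  obtain ⟨ε, hε, hball⟩ := Metric.eventually_nhds_iff.mp hcomb
  have hmono : StrictMonoOn f (Set.Icc 0 (ε/2)) := by
    apply strictMonoOn_of_deriv_pos (convex_Icc _ _)
    · apply ContinuousOn.mono hfs'.continuousOn
      intro t ht
      exact (hball (by rw [Real.dist_eq, sub_zero, abs_of_nonneg ht.1]; linarith [ht.2])).2.1
    · intro t ht
      rw [interior_Icc] at ht
      have h1 := (hball (y := t) (by
        rw [Real.dist_eq, sub_zero, abs_of_nonneg ht.1.le]; linarith [ht.2])).1
      have h2 := h1 (by simp [ne_of_gt ht.1])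
      have hsl : slope (deriv f) 0 t = deriv f t / t := by simp [slope, hg0]; ring
      rw [hsl] at h2
      rcases div_pos_iff.mp h2 with ⟨h3, _⟩ | ⟨_, h4⟩
      · exact h3
      · linarith [ht.1]
  have hlt : f 0 < f (ε/2) := hmono (by constructor <;> linarith) (by constructor <;> linarith) (by linarith)
  have : f (ε/2) ≤ f 0 :=
    (hball (y := ε/2) (by rw [Real.dist_eq, sub_zero, abs_of_nonneg (by linarith)]; linarith)).2.2
  linarith

/-- At a local max where the line restrictions are C², lap cannot be positive. -/
lemma not_isLocalMax_of_lap_pos {G : ℂ → ℝ} {z : ℂ}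
    (h1 : ContDiffAt ℝ 2 (fun t : ℝ => G (z + t)) 0)
    (h2 : ContDiffAt ℝ 2 (fun t : ℝ => G (z + t * Complex.I)) 0)
    (hl : 0 < lap G z) (hm : IsLocalMax G z) : False := by
  have c1 : Continuous fun t : ℝ => z + (t : ℂ) := by continuity
  have c2 : Continuous fun t : ℝ => z + (t : ℂ) * Complex.I := by continuity
  have t1 : Tendsto (fun t : ℝ => z + (t : ℂ)) (𝓝 0) (𝓝 z) := by
    simpa using c1.tendsto 0
  have t2 : Tendsto (fun t : ℝ => z + (t : ℂ) * Complex.I) (𝓝 0) (𝓝 z) := by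
    simpa using c2.tendsto 0
  have m1 : IsLocalMax (fun t : ℝ => G (z + t)) 0 := by
    have := t1.eventually hm
    simpa [IsLocalMax, IsMaxFilter] using this
  have m2 : IsLocalMax (fun t : ℝ => G (z + t * Complex.I)) 0 := by
    have := t2.eventually hm
    simpa [IsLocalMax, IsMaxFilter] using this
  have d1 := deriv2_nonpos_of_isLocalMax h1 m1
  have d2 := deriv2_nonpos_of_isLocalMax h2 m2
  rw [lap] at hl
  linarith

/-- derivative facts for the auxiliary 1-d function `A t = -(c/2) log((x+t)²+y²) + δ((x+t)²+y²)`. -/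
lemma hasDerivAt_A (x y c δ : ℝ) (t : ℝ) (h : (x+t)^2 + y^2 ≠ 0) :
    HasDerivAt (fun t : ℝ => -(c/2) * Real.log ((x+t)^2 + y^2) + δ * ((x+t)^2 + y^2))
      ((x+t) * (2*δ - c / ((x+t)^2 + y^2))) t := by
  have hq : HasDerivAt (fun t : ℝ => (x+t)^2 + y^2) (2*(x+t)) t := by
    have h1 : HasDerivAt (fun t : ℝ => x + t) 1 t := (hasDerivAt_id t).const_add x
    simpa using (h1.pow 2).add_const (y^2)
  have hlog : HasDerivAt (fun t : ℝ => Real.log ((x+t)^2 + y^2)) (2*(x+t) / ((x+t)^2+y^2)) t :=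
    hq.log h
  have : HasDerivAt (fun t : ℝ => -(c/2) * Real.log ((x+t)^2 + y^2) + δ * ((x+t)^2 + y^2))
      (-(c/2) * (2*(x+t) / ((x+t)^2+y^2)) + δ * (2*(x+t))) t :=
    ((hlog.const_mul (-(c/2))).add (hq.const_mul δ))
  convert this using 1
  field_simp
  ring

lemma hasDerivAt_A' (x y c δ : ℝ) (h : x^2 + y^2 ≠ 0) :
    HasDerivAt (fun t : ℝ => (x+t) * (2*δ - c / ((x+t)^2 + y^2)))
      ((2*δ - c/(x^2+y^2)) + x * (c * (2*x) / (x^2+y^2)^2)) 0 := by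
  have hq : HasDerivAt (fun t : ℝ => (x+t)^2 + y^2) (2*(x+0)) 0 := by
    have h1 : HasDerivAt (fun t : ℝ => x + t) 1 0 := (hasDerivAt_id 0).const_add x
    simpa using (h1.pow 2).add_const (y^2)
  have h0 : (x+0)^2 + y^2 ≠ 0 := by simpa using h
  have hdiv : HasDerivAt (fun t : ℝ => c / ((x+t)^2 + y^2))
      ((0 * ((x+0)^2+y^2) - c * (2*(x+0))) / ((x+0)^2+y^2)^2) 0 :=
    (hasDerivAt_const 0 c).div hq h0
  have h1 : HasDerivAt (fun t : ℝ => x + t) 1 0 := (hasDerivAt_id 0).const_add x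
  have : HasDerivAt (fun t : ℝ => (x+t) * (2*δ - c / ((x+t)^2 + y^2)))
      (1 * (2*δ - c / ((x+0)^2+y^2)) + (x+0) * (0 - (0 * ((x+0)^2+y^2) - c * (2*(x+0))) / ((x+0)^2+y^2)^2)) 0 :=
    h1.mul ((hasDerivAt_const 0 (2*δ)).sub hdiv)
  convert this using 1
  simp only [add_zero]
  field_simp
  ring

lemma deriv2_add_aux (f : ℝ → ℝ) (hf : ContDiff ℝ (⊤:ℕ∞) f) (A A' : ℝ → ℝ) (s : ℝ)
    (hA : ∀ᶠ t in 𝓝 (0:ℝ), HasDerivAt A (A' t) t) (hA' : HasDerivAt A' s 0) :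
    deriv (deriv (fun t => f t + A t)) 0 = deriv (deriv f) 0 + s := by
  have hfd : Differentiable ℝ f := hf.differentiable (by norm_num)
  have hfd' : ContDiff ℝ (⊤:ℕ∞) (deriv f) := (contDiff_infty_iff_deriv.mp hf).2
  have hev : deriv (fun t => f t + A t) =ᶠ[𝓝 (0:ℝ)] fun t => deriv f t + A' t := by
    filter_upwards [hA] with t ht
    exact ((hfd t).hasDerivAt.add ht).deriv
  calc deriv (deriv (fun t => f t + A t)) 0
      = deriv (fun t => deriv f t + A' t) 0 := hev.deriv_eq
    _ = deriv (deriv f) 0 + s := by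
        rw [deriv_fun_add ((hfd'.differentiable (by norm_num)) 0) hA'.differentiableAt, hA'.deriv]

lemma contDiff_normSq (a : ℂ) : ContDiff ℝ (⊤:ℕ∞) (fun w : ℂ => Complex.normSq (w - a)) := by
  have : (fun w : ℂ => Complex.normSq (w - a)) = fun w : ℂ => (w.re - a.re)^2 + (w.im - a.im)^2 := by
    funext w
    simp [Complex.normSq_apply, Complex.sub_re, Complex.sub_im]
    ring
  rw [this]
  exact ((Complex.reCLM.contDiff.sub contDiff_const).pow 2).add
    ((Complex.imCLM.contDiff.sub contDiff_const).pow 2)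

/-- The comparison function used in the annulus argument. -/
noncomputable def Gcmp (F : ℂ → ℝ) (a : ℂ) (c κ δ : ℝ) : ℂ → ℝ :=
  fun w => F w + (κ + (-(c/2) * Real.log (Complex.normSq (w - a)) + δ * Complex.normSq (w - a)))

lemma contDiffAt_Gcmp (F : ℂ → ℝ) (hF : ContDiff ℝ (⊤:ℕ∞) F) (a : ℂ) (c κ δ : ℝ)
    (z : ℂ) (hz : z ≠ a) : ContDiffAt ℝ (⊤:ℕ∞) (Gcmp F a c κ δ) z := by
  have hN : ContDiffAt ℝ (⊤:ℕ∞) (fun w : ℂ => Complex.normSq (w - a)) z :=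
    (contDiff_normSq a).contDiffAt
  have hNz : Complex.normSq (z - a) ≠ 0 := by
    simpa [Complex.normSq_eq_zero, sub_eq_zero] using hz
  exact hF.contDiffAt.add (contDiffAt_const.add
    ((contDiffAt_const.mul (hN.log hNz)).add (contDiffAt_const.mul hN)))

lemma normSq_line_h (z a : ℂ) (t : ℝ) :
    Complex.normSq (z + t - a) = ((z.re - a.re) + t)^2 + (z.im - a.im)^2 := by
  simp [Complex.normSq_apply, Complex.add_re, Complex.sub_re, Complex.add_im, Complex.sub_im]
  ring

lemma normSq_line_v (z a : ℂ) (t : ℝ) :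
    Complex.normSq (z + t * Complex.I - a) = ((z.im - a.im) + t)^2 + (z.re - a.re)^2 := by
  simp [Complex.normSq_apply, Complex.add_re, Complex.sub_re, Complex.add_im, Complex.sub_im]
  ring

lemma lap_Gcmp (F : ℂ → ℝ) (hF : ContDiff ℝ (⊤:ℕ∞) F) (a : ℂ) (c κ δ : ℝ) (z : ℂ)
    (hz : z ≠ a) : lap (Gcmp F a c κ δ) z = lap F z + 4*δ := by
  set x := z.re - a.re with hx
  set y := z.im - a.im with hy
  have hq0 : x^2 + y^2 ≠ 0 := by
    have : Complex.normSq (z - a) ≠ 0 := by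
      simpa [Complex.normSq_eq_zero, sub_eq_zero] using hz
    intro h
    apply this
    simp [Complex.normSq_apply, Complex.sub_re, Complex.sub_im, ← hx, ← hy]
    nlinarith [sq_nonneg x, sq_nonneg y, h]
  have hq0' : y^2 + x^2 ≠ 0 := by intro h; apply hq0; linarith
  -- horizontal direction
  have hH : deriv (deriv (fun t : ℝ => Gcmp F a c κ δ (z + t))) 0
      = deriv (deriv (fun t : ℝ => F (z + t))) 0
        + ((2*δ - c/(x^2+y^2)) + x * (c * (2*x) / (x^2+y^2)^2)) := by
    have heq : (fun t : ℝ => Gcmp F a c κ δ (z + t))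
        = fun t : ℝ => F (z + t) + (κ + (-(c/2) * Real.log ((x+t)^2 + y^2) + δ * ((x+t)^2 + y^2))) := by
      funext t
      rw [Gcmp, normSq_line_h]
    rw [heq]
    apply deriv2_add_aux _ (hF.comp (contDiff_const.add Complex.ofRealCLM.contDiff))
      _ (fun t => (x+t) * (2*δ - c / ((x+t)^2 + y^2)))
    · have hc : Continuous fun t : ℝ => (x+t)^2 + y^2 := by continuity
      have h0 : (x+(0:ℝ))^2 + y^2 ≠ 0 := by simpa using hq0
      filter_upwards [hc.continuousAt.eventually_ne h0] with t ht
      exact ((hasDerivAt_A x y c δ t ht).const_add κ)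
    · exact hasDerivAt_A' x y c δ hq0
  -- vertical direction
  have hV : deriv (deriv (fun t : ℝ => Gcmp F a c κ δ (z + t * Complex.I))) 0
      = deriv (deriv (fun t : ℝ => F (z + t * Complex.I))) 0
        + ((2*δ - c/(y^2+x^2)) + y * (c * (2*y) / (y^2+x^2)^2)) := by
    have heq : (fun t : ℝ => Gcmp F a c κ δ (z + t * Complex.I))
        = fun t : ℝ => F (z + t * Complex.I) + (κ + (-(c/2) * Real.log ((y+t)^2 + x^2) + δ * ((y+t)^2 + x^2))) := by
      funext t
      rw [Gcmp, normSq_line_v]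
    rw [heq]
    apply deriv2_add_aux _ (hF.comp (contDiff_const.add (Complex.ofRealCLM.contDiff.mul contDiff_const)))
      _ (fun t => (y+t) * (2*δ - c / ((y+t)^2 + x^2)))
    · have hc : Continuous fun t : ℝ => (y+t)^2 + x^2 := by continuity
      have h0 : (y+(0:ℝ))^2 + x^2 ≠ 0 := by simpa using hq0'
      filter_upwards [hc.continuousAt.eventually_ne h0] with t ht
      exact ((hasDerivAt_A y x c δ t ht).const_add κ)
    · exact hasDerivAt_A' y x c δ hq0'
  rw [lap, lap, hH, hV]
  have : ((2*δ - c/(x^2+y^2)) + x * (c * (2*x) / (x^2+y^2)^2))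
      + ((2*δ - c/(y^2+x^2)) + y * (c * (2*y) / (y^2+x^2)^2)) = 4*δ := by
    field_simp
    ring
  linarith [this]

lemma normSq_of_dist (z a : ℂ) (r : ℝ) (h : dist z a = r) : Complex.normSq (z - a) = r^2 := by
  rw [← Complex.sq_norm, ← Complex.dist_eq, h]

lemma annulus_bound (F : ℂ → ℝ) (hF : ContDiff ℝ (⊤:ℕ∞) F) (hsub : ∀ z, 0 ≤ lap F z)
    (a : ℂ) (r R m C δ : ℝ) (hr : 0 < r) (hrR : r < R) (hδ : 0 < δ)
    (hC : ∀ z, F z ≤ C) (hmC : m ≤ C) (hm : ∀ z, dist z a = r → F z ≤ m)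
    (b : ℂ) (hb1 : r ≤ dist b a) (hb2 : dist b a ≤ R) :
    F b ≤ m + (C - m) / (Real.log R - Real.log r) * (Real.log (dist b a) - Real.log r)
        + δ * R^2 := by
  have hlogs : Real.log r < Real.log R := Real.log_lt_log hr hrR
  set c : ℝ := (C - m) / (Real.log R - Real.log r) with hc_def
  have hc : 0 ≤ c := div_nonneg (by linarith) (by linarith)
  set κ : ℝ := -m + c * Real.log r with hκ_def
  set G : ℂ → ℝ := Gcmp F a c κ δ with hG_def
  have hGval : ∀ z : ℂ, G z = F z - m + c * Real.log r
      - (c/2) * Real.log (Complex.normSq (z - a)) + δ * Complex.normSq (z - a) := by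
    intro z; rw [hG_def, Gcmp]; ring
  -- the annulus
  set A : Set ℂ := Metric.closedBall a R \ Metric.ball a r with hA_def
  have hA_closed : IsClosed A := Metric.isClosed_closedBall.sdiff Metric.isOpen_ball
  have hA_compact : IsCompact A :=
    (isCompact_closedBall a R).of_isClosed_subset hA_closed Set.diff_subset
  have hbA : b ∈ A := by
    constructor
    · exact Metric.mem_closedBall.mpr hb2
    · simp only [Metric.mem_ball, not_lt]; exact hb1
  have hne : ∀ z ∈ A, z ≠ a := by
    intro z hz he
    have : ¬ dist z a < r := by simpa [Metric.mem_ball] using hz.2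
    rw [he, dist_self] at this
    exact this hr
  have hGc : ContinuousOn G A := fun z hz =>
    ((contDiffAt_Gcmp F hF a c κ δ z (hne z hz)).continuousAt).continuousWithinAt
  obtain ⟨zs, hzsA, hmax⟩ := hA_compact.exists_isMaxOn ⟨b, hbA⟩ hGc
  have hzs1 : r ≤ dist zs a := by
    have : ¬ dist zs a < r := by simpa [Metric.mem_ball] using hzsA.2
    linarith [not_lt.mp this]
  have hzs2 : dist zs a ≤ R := Metric.mem_closedBall.mp hzsA.1
  have hGzs : G zs ≤ δ * R^2 := by
    rcases eq_or_lt_of_le hzs1 with hinner | h1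
    · -- on inner circle
      have hNz : Complex.normSq (zs - a) = r^2 := normSq_of_dist zs a r hinner.symm
      have hlog : Real.log (r^2) = 2 * Real.log r := by
        rw [Real.log_pow]; norm_num
      have := hm zs hinner.symm
      rw [hGval, hNz, hlog]
      have hr2 : r^2 ≤ R^2 := by nlinarith
      nlinarith
    rcases eq_or_lt_of_le hzs2 with houter | h2
    · -- on outer circle
      have hNz : Complex.normSq (zs - a) = R^2 := normSq_of_dist zs a R houter
      have hlog : Real.log (R^2) = 2 * Real.log R := by
        rw [Real.log_pow]; norm_num
      have hcancel : c * (Real.log R - Real.log r) = C - m := by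
        rw [hc_def]
        exact div_mul_cancel₀ _ (ne_of_gt (by linarith))
      have := hC zs
      rw [hGval, hNz, hlog]
      nlinarith
    · -- interior: impossible
      exfalso
      have hzsa : zs ≠ a := hne zs hzsA
      have hU : A ∈ 𝓝 zs := by
        rw [mem_nhds_iff]
        refine ⟨Metric.ball a R \ Metric.closedBall a r, ?_, Metric.isOpen_ball.sdiff Metric.isClosed_closedBall, ?_⟩
        · intro w hw
          exact ⟨Metric.ball_subset_closedBall hw.1, fun hc' => hw.2 (Metric.ball_subset_closedBall hc')⟩
        · exact ⟨Metric.mem_ball.mpr h2, by simpa [Metric.mem_closedBall, not_le] using h1⟩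
      have hlmax : IsLocalMax G zs := hmax.isLocalMax hU
      have hGsm := contDiffAt_Gcmp F hF a c κ δ zs hzsa
      have hline1 : ContDiffAt ℝ 2 (fun t : ℝ => G (zs + t)) 0 := by
        have hin : ContDiffAt ℝ 2 (fun t : ℝ => zs + (t:ℂ)) 0 :=
          (contDiff_const.add Complex.ofRealCLM.contDiff).contDiffAt
        have hGsm0 : ContDiffAt ℝ 2 (Gcmp F a c κ δ) ((fun t : ℝ => zs + (t:ℂ)) 0) := by
          simpa using (hGsm.of_le (by norm_cast))
        have := hGsm0.comp (0:ℝ) hin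
        exact this
      have hline2 : ContDiffAt ℝ 2 (fun t : ℝ => G (zs + t * Complex.I)) 0 := by
        have hin : ContDiffAt ℝ 2 (fun t : ℝ => zs + (t:ℂ) * Complex.I) 0 :=
          (contDiff_const.add (Complex.ofRealCLM.contDiff.mul contDiff_const)).contDiffAt
        have hGsm0 : ContDiffAt ℝ 2 (Gcmp F a c κ δ) ((fun t : ℝ => zs + (t:ℂ) * Complex.I) 0) := by
          simpa using (hGsm.of_le (by norm_cast))
        have := hGsm0.comp (0:ℝ) hin
        exact this
      have hlap : 0 < lap G zs := by
        rw [hG_def, lap_Gcmp F hF a c κ δ zs hzsa]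
        linarith [hsub zs]
      exact not_isLocalMax_of_lap_pos hline1 hline2 hlap hlmax
  -- conclude
  have hGb : G b ≤ δ * R^2 := le_trans (hmax hbA) hGzs
  have hNb : Complex.normSq (b - a) = (dist b a)^2 := normSq_of_dist b a _ rfl
  have hlogb : Real.log ((dist b a)^2) = 2 * Real.log (dist b a) := by
    rw [Real.log_pow]; norm_num
  rw [hGval, hNb, hlogb] at hGb
  have hdb : 0 ≤ (dist b a)^2 := sq_nonneg _
  nlinarith

/-- Liouville theorem for bounded (above) subharmonic functions on ℂ. -/
lemma liouville_subharmonic (F : ℂ → ℝ) (hF : ContDiff ℝ (⊤:ℕ∞) F)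
    (hsub : ∀ z, 0 ≤ lap F z) (C : ℝ) (hC : ∀ z, F z ≤ C) :
    ∀ a b : ℂ, F b ≤ F a := by
  intro a b
  rcases eq_or_ne b a with rfl | hba
  · exact le_refl _
  have hd : 0 < dist b a := dist_pos.mpr hba
  set d := dist b a with hd_def
  -- suffices to show F b ≤ F a + ε for all ε > 0
  have key : ∀ ε : ℝ, 0 < ε → F b ≤ F a + 3 * ε := by
    intro ε hε
    -- choose r small using continuity of F at a
    obtain ⟨δ₀, hδ₀, hδball⟩ := Metric.continuousAt_iff.mp (hF.continuous.continuousAt) ε hε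
    set r := min (δ₀/2) d with hr_def
    have hr : 0 < r := lt_min (by linarith) hd
    have hrd : r ≤ d := min_le_right _ _
    set m := F a + ε with hm_def
    have hm : ∀ z, dist z a = r → F z ≤ m := by
      intro z hz
      have : dist z a < δ₀ := by rw [hz]; calc r ≤ δ₀/2 := min_le_left _ _
        _ < δ₀ := by linarith
      have := hδball this
      have := abs_lt.mp (by simpa [Real.dist_eq] using this)
      linarith [this.2]
    set C' := max C m with hC'_def
    have hC' : ∀ z, F z ≤ C' := fun z => le_trans (hC z) (le_max_left _ _)
    have hmC' : m ≤ C' := le_max_right _ _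
    -- choose R large
    set Kc := (C' - m) * (Real.log d - Real.log r) with hKc_def
    have hKc : 0 ≤ Kc := by
      apply mul_nonneg
      · linarith [hmC']
      · have := Real.log_le_log hr hrd
        linarith
    set R := max (d + 1) (r * Real.exp (Kc/ε + 1)) with hR_def
    have hRd : d + 1 ≤ R := le_max_left _ _
    have hrR : r < R := by
      calc r ≤ d := hrd
        _ < d + 1 := by linarith
        _ ≤ R := hRd
    have hlogR : Kc/ε + 1 ≤ Real.log R - Real.log r := by
      have h1 : r * Real.exp (Kc/ε + 1) ≤ R := le_max_right _ _
      have h2 : Real.log (r * Real.exp (Kc/ε + 1)) ≤ Real.log R :=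
        Real.log_le_log (by positivity) h1
      rw [Real.log_mul (ne_of_gt hr) (ne_of_gt (Real.exp_pos _)), Real.log_exp] at h2
      linarith
    have hlogpos : 0 < Real.log R - Real.log r := by
      have : 0 ≤ Kc/ε := div_nonneg hKc hε.le
      linarith
    -- middle term bound
    have hmid : (C' - m) / (Real.log R - Real.log r) * (Real.log d - Real.log r) ≤ ε := by
      rw [div_mul_eq_mul_div, ← hKc_def, div_le_iff₀ hlogpos]
      calc Kc ≤ Kc + ε := by linarith
        _ = ε * (Kc/ε + 1) := by field_simp
        _ ≤ ε * (Real.log R - Real.log r) := by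
            apply mul_le_mul_of_nonneg_left hlogR hε.le
    -- apply the annulus bound with δ = ε / R²
    have hR0 : 0 < R := by linarith [hd]
    set δ := ε / R^2 with hδ_def
    have hδpos : 0 < δ := by positivity
    have hann := annulus_bound F hF hsub a r R m C' δ hr hrR hδpos hC' hmC' hm b hrd (by
      calc d ≤ d + 1 := by linarith
        _ ≤ R := hRd)
    have hδR : δ * R^2 = ε := by
      rw [hδ_def]; field_simp
    rw [← hd_def, hδR] at hann
    calc F b ≤ m + (C' - m) / (Real.log R - Real.log r) * (Real.log d - Real.log r) + ε := hann
      _ ≤ m + ε + ε := by linarith [hmid]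
      _ = F a + 3 * ε := by rw [hm_def]; ring
  by_contra hcon
  push_neg at hcon
  have := key ((F b - F a)/6) (by linarith)
  linarith

lemma lineH_contDiff (f : ℂ → ℝ) (hf : ContDiff ℝ (⊤:ℕ∞) f) (z : ℂ) :
    ContDiff ℝ (⊤:ℕ∞) (fun t : ℝ => f (z + t)) :=
  hf.comp (contDiff_const.add Complex.ofRealCLM.contDiff)

lemma lineV_contDiff (f : ℂ → ℝ) (hf : ContDiff ℝ (⊤:ℕ∞) f) (z : ℂ) :
    ContDiff ℝ (⊤:ℕ∞) (fun t : ℝ => f (z + t * Complex.I)) :=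
  hf.comp (contDiff_const.add (Complex.ofRealCLM.contDiff.mul contDiff_const))

lemma deriv2_sub_1d (f g : ℝ → ℝ) (hf : ContDiff ℝ (⊤:ℕ∞) f) (hg : ContDiff ℝ (⊤:ℕ∞) g) :
    deriv (deriv (fun t => f t - g t)) 0 = deriv (deriv f) 0 - deriv (deriv g) 0 := by
  have hfd : Differentiable ℝ f := hf.differentiable (by norm_num)
  have hgd : Differentiable ℝ g := hg.differentiable (by norm_num)
  have hfd' : Differentiable ℝ (deriv f) := (contDiff_infty_iff_deriv.mp hf).2.differentiable (by norm_num)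
  have hgd' : Differentiable ℝ (deriv g) := (contDiff_infty_iff_deriv.mp hg).2.differentiable (by norm_num)
  have h1 : deriv (fun t => f t - g t) = fun t => deriv f t - deriv g t := by
    funext t
    exact deriv_sub (hfd t) (hgd t)
  rw [h1, deriv_fun_sub (hfd' 0) (hgd' 0)]

lemma lap_sub (f g : ℂ → ℝ) (hf : ContDiff ℝ (⊤:ℕ∞) f) (hg : ContDiff ℝ (⊤:ℕ∞) g) (z : ℂ) :
    lap (fun w => f w - g w) z = lap f z - lap g z := by
  rw [lap, lap, lap]
  rw [deriv2_sub_1d _ _ (lineH_contDiff f hf z) (lineH_contDiff g hg z),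
      deriv2_sub_1d _ _ (lineV_contDiff f hf z) (lineV_contDiff g hg z)]
  ring

lemma deriv2_sq_1d (f : ℝ → ℝ) (hf : ContDiff ℝ (⊤:ℕ∞) f) :
    deriv (deriv (fun t => (f t)^2)) 0
      = 2*(deriv f 0)^2 + 2*(f 0)*(deriv (deriv f) 0) := by
  have hfd : Differentiable ℝ f := hf.differentiable (by norm_num)
  have hfd' : Differentiable ℝ (deriv f) := (contDiff_infty_iff_deriv.mp hf).2.differentiable (by norm_num)
  have h1 : deriv (fun t => (f t)^2) = fun t => 2 * f t * deriv f t := by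
    funext t
    have := ((hfd t).hasDerivAt.pow 2).deriv
    change deriv (f^2) t = _
    simpa using this
  rw [h1]
  have h2 : HasDerivAt (fun t => 2 * f t * deriv f t)
      (2 * deriv f 0 * deriv f 0 + 2 * f 0 * deriv (deriv f) 0) 0 := by
    have ha : HasDerivAt (fun t => 2 * f t) (2 * deriv f 0) 0 := ((hfd 0).hasDerivAt).const_mul 2
    have hb : HasDerivAt (deriv f) (deriv (deriv f) 0) 0 := (hfd' 0).hasDerivAt
    exact ha.mul hb
  rw [h2.deriv]
  ring

lemma lap_sq_ge (f : ℂ → ℝ) (hf : ContDiff ℝ (⊤:ℕ∞) f) (z : ℂ) :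
    2 * f z * lap f z ≤ lap (fun w => (f w)^2) z := by
  rw [lap, lap]
  rw [deriv2_sq_1d _ (lineH_contDiff f hf z), deriv2_sq_1d _ (lineV_contDiff f hf z)]
  have e1 : (fun t : ℝ => f (z + t)) 0 = f z := by norm_num
  have e2 : (fun t : ℝ => f (z + t * Complex.I)) 0 = f z := by norm_num
  simp only [e1, e2] at *
  nlinarith [sq_nonneg (deriv (fun t : ℝ => f (z + t)) 0),
    sq_nonneg (deriv (fun t : ℝ => f (z + t * Complex.I)) 0)]

lemma lap_const (c : ℝ) (z : ℂ) : lap (fun _ => c) z = 0 := by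
  rw [lap]
  simp


/-- Theorem 3.2 (uniqueness): any two solutions of `Δu + K e^{2u} = 0` of the form
`2u = v - k log φ` with `v` smooth and bounded coincide. -/
theorem stmt_8 (α φ ψ K : ℂ → ℝ)
    (hα : ContDiff ℝ (⊤ : ℕ∞) α) (hφ : ContDiff ℝ (⊤ : ℕ∞) φ) (hψ : ContDiff ℝ (⊤ : ℕ∞) ψ)
    (hK : ContDiff ℝ (⊤ : ℕ∞) K)
    (hφpos : ∀ z, 0 < φ z) (hψnn : ∀ z, 0 ≤ ψ z) (hαpos : ∀ z, 0 < α z)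
    (hβ : ∃ β : ℂ → ℝ, ContDiff ℝ (⊤ : ℕ∞) β ∧ (∀ z, 0 < β z) ∧
      ∀ z : ℂ, z ≠ 0 → β z = α z⁻¹ * ‖z‖ ^ (-(4 : ℝ)))
    (hKnp : ∀ z, K z ≤ 0) (hKne : ∃ z, K z ≠ 0)
    (Λ : ℝ) (hKΛ : ∀ z, |K z| ≤ Λ * ψ z)
    (k : ℝ)
    (hM : ∃ M : ℝ, ∀ z, α z * φ z ^ k ≤ M * ψ z)
    (hq : ∃ q : ℝ, 1 < q ∧
      Integrable (fun z : ℂ => α z ^ (1 - q) * (φ z ^ (-k) * ψ z) ^ q))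
    (hint : Integrable (fun z : ℂ => k * lap (fun w => Real.log (φ w)) z))
    (hneg : (∫ z : ℂ, k * lap (fun w => Real.log (φ w)) z) < 0)
    (hbound : ∀ z : ℂ, |k * φ z ^ k * lap (fun w => Real.log (φ w)) z| ≤ 2 * Λ * ψ z)
    (u u' v v' : ℂ → ℝ) (hv : ContDiff ℝ (⊤ : ℕ∞) v) (hv' : ContDiff ℝ (⊤ : ℕ∞) v')
    (hb : ∃ B : ℝ, ∀ z, |v z| ≤ B) (hb' : ∃ B : ℝ, ∀ z, |v' z| ≤ B)
    (hform : ∀ z : ℂ, 2 * u z = v z - k * Real.log (φ z))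
    (hform' : ∀ z : ℂ, 2 * u' z = v' z - k * Real.log (φ z))
    (hsol : ∀ z : ℂ, lap u z + K z * Real.exp (2 * u z) = 0)
    (hsol' : ∀ z : ℂ, lap u' z + K z * Real.exp (2 * u' z) = 0) :
    u = u' := by
  have hφs : ContDiff ℝ (⊤:ℕ∞) φ := hφ.of_le (by simp)
  have hvs : ContDiff ℝ (⊤:ℕ∞) v := hv.of_le (by simp)
  have hvs' : ContDiff ℝ (⊤:ℕ∞) v' := hv'.of_le (by simp)
  have hu_eq : u = fun z => (v z - k * Real.log (φ z)) / 2 := by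
    funext z; have := hform z; linarith
  have hu'_eq : u' = fun z => (v' z - k * Real.log (φ z)) / 2 := by
    funext z; have := hform' z; linarith
  have hlog : ContDiff ℝ (⊤:ℕ∞) (fun z => Real.log (φ z)) :=
    hφs.log (fun z => (hφpos z).ne')
  have husm : ContDiff ℝ (⊤:ℕ∞) u := by
    rw [hu_eq]; exact (hvs.sub (contDiff_const.mul hlog)).div_const 2
  have hu'sm : ContDiff ℝ (⊤:ℕ∞) u' := by
    rw [hu'_eq]; exact (hvs'.sub (contDiff_const.mul hlog)).div_const 2
  set W : ℂ → ℝ := fun z => u z - u' z with hW_def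
  have hWsm : ContDiff ℝ (⊤:ℕ∞) W := husm.sub hu'sm
  obtain ⟨B, hB⟩ := hb
  obtain ⟨B', hB'⟩ := hb'
  have hWbd : ∀ z, (W z)^2 ≤ ((B + B')/2)^2 := by
    intro z
    have h1 : W z = (v z - v' z)/2 := by
      have e1 := hform z; have e2 := hform' z
      simp only [hW_def]; linarith
    have h2 := abs_le.mp (hB z)
    have h3 := abs_le.mp (hB' z)
    rw [h1]
    nlinarith [h2.1, h2.2, h3.1, h3.2]
  have hlapW : ∀ z, lap W z = K z * (Real.exp (2 * u' z) - Real.exp (2 * u z)) := by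
    intro z
    have hls := lap_sub u u' husm hu'sm z
    have h1 := hsol z
    have h2 := hsol' z
    calc lap W z = lap u z - lap u' z := hls
      _ = K z * (Real.exp (2 * u' z) - Real.exp (2 * u z)) := by linear_combination h1 - h2
  have hFsub : ∀ z, 0 ≤ lap (fun z => (W z)^2) z := by
    intro z
    have hge := lap_sq_ge W hWsm z
    have hsign : 0 ≤ 2 * W z * lap W z := by
      rw [hlapW z]
      rcases le_or_gt (u' z) (u z) with h | h
      · have hw0 : 0 ≤ W z := by simp only [hW_def]; linarith
        have hexp : Real.exp (2*u' z) - Real.exp (2*u z) ≤ 0 := by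
          have := Real.exp_le_exp.mpr (by linarith : 2*u' z ≤ 2*u z)
          linarith
        have hKE : 0 ≤ K z * (Real.exp (2*u' z) - Real.exp (2*u z)) := by
          nlinarith [mul_nonneg (neg_nonneg.mpr (hKnp z)) (neg_nonneg.mpr hexp)]
        exact mul_nonneg (by linarith) hKE
      · have hw0 : W z ≤ 0 := by simp only [hW_def]; linarith
        have hexp : 0 ≤ Real.exp (2*u' z) - Real.exp (2*u z) := by
          have := Real.exp_le_exp.mpr (by linarith : 2*u z ≤ 2*u' z)
          linarith
        have hKE : K z * (Real.exp (2*u' z) - Real.exp (2*u z)) ≤ 0 := by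
          nlinarith [mul_nonneg (neg_nonneg.mpr (hKnp z)) hexp]
        nlinarith [mul_nonneg (neg_nonneg.mpr (by linarith : 2 * W z ≤ 0)) (neg_nonneg.mpr hKE)]
    linarith
  have hLiou := liouville_subharmonic (fun z => (W z)^2) (hWsm.pow 2) hFsub
    (((B + B')/2)^2) hWbd
  have hFeq : ∀ z, (W z)^2 = (W 0)^2 := fun z => le_antisymm (hLiou 0 z) (hLiou z 0)
  -- W is constant
  have hWconst : ∀ z, W z = W 0 := by
    intro z
    rcases sq_eq_sq_iff_eq_or_eq_neg.mp (hFeq z) with h | h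
    · exact h
    · rcases eq_or_ne (W 0) 0 with h0 | h0
      · rw [h, h0, neg_zero]
      · rcases eq_or_ne (W z) (W 0) with heq | _
        · exact heq
        exfalso
        set g : ℝ → ℝ := fun t => W ((t:ℂ) * z) with hg_def
        have hgc : Continuous g := hWsm.continuous.comp (by continuity)
        have hg0 : g 0 = W 0 := by simp [hg_def]
        have hg1 : g 1 = W z := by simp [hg_def]
        have hzero : ∃ t ∈ Set.Icc (0:ℝ) 1, g t = 0 := by
          rcases lt_or_gt_of_ne h0 with hneg | hpos
          · have hmem : (0:ℝ) ∈ Set.Icc (g 0) (g 1) := by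
              rw [hg0, hg1, h]
              constructor <;> linarith
            obtain ⟨t, ht, hgt⟩ := intermediate_value_Icc (by norm_num : (0:ℝ) ≤ 1)
              hgc.continuousOn hmem
            exact ⟨t, ht, hgt⟩
          · have hmem : (0:ℝ) ∈ Set.Icc (g 1) (g 0) := by
              rw [hg0, hg1, h]
              constructor <;> linarith
            obtain ⟨t, ht, hgt⟩ := intermediate_value_Icc' (by norm_num : (0:ℝ) ≤ 1)
              hgc.continuousOn hmem
            exact ⟨t, ht, hgt⟩
        obtain ⟨t, _, hgt⟩ := hzero
        have hsq := hFeq ((t:ℂ) * z)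
        rw [show W ((t:ℂ) * z) = 0 from hgt] at hsq
        have hW02 : W 0 ^ 2 = 0 := by simpa using hsq.symm
        exact h0 ((pow_eq_zero_iff (by norm_num : (2:ℕ) ≠ 0)).mp hW02)
  obtain ⟨z₀, hK0⟩ := hKne
  have hWfun : W = fun _ => W 0 := funext hWconst
  have hlap0 : lap W z₀ = 0 := by rw [hWfun]; exact lap_const _ _
  have hprod := hlapW z₀
  rw [hlap0] at hprod
  have hexp_eq : Real.exp (2*u' z₀) = Real.exp (2*u z₀) := by
    rcases mul_eq_zero.mp hprod.symm with h | h
    · exact absurd h hK0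
    · linarith
  have h2u : 2 * u' z₀ = 2 * u z₀ := Real.exp_eq_exp.mp hexp_eq
  have hWz₀ : W z₀ = 0 := by simp only [hW_def]; linarith
  have hW0 : W 0 = 0 := (hWconst z₀) ▸ hWz₀
  funext z
  have hz := hWconst z
  rw [hW0] at hz
  have : u z - u' z = 0 := hz
  linarith
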